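/- arXiv:1010.0354 — 5 statements merged into one kernel-verified Lean document; each statement's English description precedes it below -/
import Mathlib

section
/- For differentiation D and multiplication X on smooth functions (or formal power series), the normal-ordered coefficient I^{(n)}_{ℓ,m} of X^ℓ D^m in (αX + βD)^n equals 0 if n - ℓ - m is odd, and equals n! / (2^{(n-ℓ-m)/2} · ((n-ℓ-m)/2)! · ℓ! · m!) · α^{(n+ℓ-m)/2} · β^{(n-ℓ+m)/2} if n - ℓ - m is even and nonnegative. -/
/-- The differentiation operator `D` on `ℝ[x]`. -/
noncomputable def Dop : Module.End ℝ (Polynomial ℝ) := Polynomial.derivative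

/-- The operator `X` of multiplication by `x` on `ℝ[x]`. -/
noncomputable def Xop : Module.End ℝ (Polynomial ℝ) := LinearMap.mulLeft ℝ (Polynomial.X)

/-! If `b * a = a * b + c` with `c` a scalar, then `(a + b) * (a ^ ℓ * b ^ m)` is
`a ^ (ℓ + 1) * b ^ m + a ^ ℓ * b ^ (m + 1) + ℓ c • a ^ (ℓ - 1) * b ^ m`, so the normal-order
coefficients of `(a + b) ^ n` obey a three-term Pascal-type recursion. The closed form
`n! / (2 ^ k k! ℓ! m!) c ^ k`, `n = ℓ + m + 2 k`, satisfies it because `n + 1 = ℓ + m + 2 k`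
splits it into the three contributions; it is the degree-`n` part of
`exp (a + b) = exp a * exp b * exp (c / 2)`. The theorem is the case `a = α X`, `b = β D`,
`c = α β`. -/

open Finset
open scoped Nat

theorem Finset.sum_range_comp_succ_eq_of_zero {M : Type*} [AddCommMonoid M] {u : ℕ → M}
    {N : ℕ} (h0 : u 0 = 0) (hN : u N = 0) :
    ∑ i ∈ range N, u (i + 1) = ∑ i ∈ range N, u i := by
  rw [← add_zero (∑ i ∈ range N, u (i + 1)), ← h0, ← sum_range_succ', sum_range_succ, hN,
    add_zero]

section NormalOrder

variable {K A : Type*} [Field K] [Ring A] [Algebra K A]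

def normalOrderCoeff (c : K) (n ℓ m : ℕ) : K :=
  if ℓ + m ≤ n ∧ (n - (ℓ + m)) % 2 = 0 then
    n ! / (2 ^ ((n - (ℓ + m)) / 2) * ((n - (ℓ + m)) / 2)! * ℓ ! * m !) *
      c ^ ((n - (ℓ + m)) / 2)
  else 0

theorem normalOrderCoeff_of_eq (c : K) {n ℓ m k : ℕ} (h : n = ℓ + m + 2 * k) :
    normalOrderCoeff c n ℓ m = n ! / (2 ^ k * k ! * ℓ ! * m !) * c ^ k := by
  have hk : (n - (ℓ + m)) / 2 = k := by omega
  rw [normalOrderCoeff, if_pos (by omega), hk]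

theorem normalOrderCoeff_eq_zero (c : K) {n ℓ m : ℕ} (h : ¬∃ k, n = ℓ + m + 2 * k) :
    normalOrderCoeff c n ℓ m = 0 :=
  if_neg fun hc => h ⟨(n - (ℓ + m)) / 2, by omega⟩

theorem succ_mul_normalOrderCoeff_succ_left [CharZero K] (c : K) (n ℓ m : ℕ) :
    (ℓ + 1 : K) * normalOrderCoeff c (n + 1) (ℓ + 1) m =
      (n + 1) * normalOrderCoeff c n ℓ m := by
  by_cases hk : ∃ k, n = ℓ + m + 2 * k
  · obtain ⟨k, hk⟩ := hk
    rw [normalOrderCoeff_of_eq c hk,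
      normalOrderCoeff_of_eq c (show n + 1 = ℓ + 1 + m + 2 * k by omega)]
    push_cast [Nat.factorial_succ]
    field_simp
  · rw [normalOrderCoeff_eq_zero c hk,
      normalOrderCoeff_eq_zero c fun ⟨k, hk'⟩ => hk ⟨k, by omega⟩]
    simp

theorem succ_mul_normalOrderCoeff_succ_right [CharZero K] (c : K) (n ℓ m : ℕ) :
    (m + 1 : K) * normalOrderCoeff c (n + 1) ℓ (m + 1) =
      (n + 1) * normalOrderCoeff c n ℓ m := by
  by_cases hk : ∃ k, n = ℓ + m + 2 * k
  · obtain ⟨k, hk⟩ := hk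
    rw [normalOrderCoeff_of_eq c hk,
      normalOrderCoeff_of_eq c (show n + 1 = ℓ + (m + 1) + 2 * k by omega)]
    push_cast [Nat.factorial_succ]
    field_simp
  · rw [normalOrderCoeff_eq_zero c hk,
      normalOrderCoeff_eq_zero c fun ⟨k, hk'⟩ => hk ⟨k, by omega⟩]
    simp

theorem sub_mul_normalOrderCoeff_succ [CharZero K] (c : K) (n ℓ m : ℕ) :
    ((n + 1 : K) - ℓ - m) * normalOrderCoeff c (n + 1) ℓ m =
      (n + 1) * ((ℓ + 1) * c * normalOrderCoeff c n (ℓ + 1) m) := by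
  by_cases hk : ∃ k, n + 1 = ℓ + m + 2 * k
  · obtain ⟨k, hk⟩ := hk
    have hk' : (n + 1 : K) = ℓ + m + 2 * k := by exact_mod_cast hk
    rw [show (n + 1 : K) - ℓ - m = 2 * k by rw [hk']; ring]
    cases k with
    | zero =>
      rw [normalOrderCoeff_eq_zero c (n := n) fun ⟨k', h⟩ => by omega]
      simp
    | succ k =>
      rw [normalOrderCoeff_of_eq c hk,
        normalOrderCoeff_of_eq c (show n = ℓ + 1 + m + 2 * k by omega)]
      push_cast [Nat.factorial_succ, pow_succ]
      field_simp
  · rw [normalOrderCoeff_eq_zero c hk,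
      normalOrderCoeff_eq_zero c fun ⟨k, hk'⟩ => hk ⟨k + 1, by omega⟩]
    simp

theorem normalOrderCoeff_succ [CharZero K] (c : K) (n ℓ m : ℕ) :
    normalOrderCoeff c (n + 1) ℓ m =
      (if ℓ = 0 then 0 else normalOrderCoeff c n (ℓ - 1) m) +
        (if m = 0 then 0 else normalOrderCoeff c n ℓ (m - 1)) +
        (ℓ + 1) * c * normalOrderCoeff c n (ℓ + 1) m := by
  have hl : (ℓ : K) * normalOrderCoeff c (n + 1) ℓ m =
      (n + 1) * if ℓ = 0 then 0 else normalOrderCoeff c n (ℓ - 1) m := by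
    cases ℓ with
    | zero => simp
    | succ ℓ => simpa using succ_mul_normalOrderCoeff_succ_left c n ℓ m
  have hm : (m : K) * normalOrderCoeff c (n + 1) ℓ m =
      (n + 1) * if m = 0 then 0 else normalOrderCoeff c n ℓ (m - 1) := by
    cases m with
    | zero => simp
    | succ m => simpa using succ_mul_normalOrderCoeff_succ_right c n ℓ m
  refine mul_left_cancel₀ (n.cast_add_one_ne_zero (R := K)) ?_
  rw [mul_add, mul_add, ← hl, ← hm, ← sub_mul_normalOrderCoeff_succ]
  ring

variable {a b : A} {c : K}

theorem mul_pow_succ_of_commutator (h : b * a = a * b + algebraMap K A c) (ℓ : ℕ) :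
    b * a ^ (ℓ + 1) = a ^ (ℓ + 1) * b + ((ℓ + 1) * c) • a ^ ℓ := by
  induction ℓ with
  | zero => simpa [Algebra.smul_def] using h
  | succ ℓ ih =>
    rw [pow_succ, ← mul_assoc, ih, add_mul, mul_assoc, h, smul_mul_assoc, ← pow_succ, mul_add,
      ← mul_assoc, ← pow_succ, ← Algebra.commutes, ← Algebra.smul_def]
    push_cast
    module

/- At `ℓ = 0` the junk power `a ^ (0 - 1)` carries the coefficient `0`. -/
theorem add_mul_pow_mul_pow_of_commutator (h : b * a = a * b + algebraMap K A c) (ℓ m : ℕ) :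
    (a + b) * (a ^ ℓ * b ^ m) =
      a ^ (ℓ + 1) * b ^ m + a ^ ℓ * b ^ (m + 1) + (ℓ * c) • (a ^ (ℓ - 1) * b ^ m) := by
  cases ℓ with
  | zero => simp [add_mul, ← pow_succ']
  | succ ℓ =>
    rw [add_mul, ← mul_assoc, ← mul_assoc, ← pow_succ', mul_pow_succ_of_commutator h, add_mul,
      mul_assoc, smul_mul_assoc, ← pow_succ', add_tsub_cancel_right]
    push_cast
    abel

/- Any box larger than `n` works; keeping it fixed through the induction means that shifting an
index by one only moves terms that vanish across its edge. -/
theorem add_pow_eq_sum_normalOrderCoeff_smul [CharZero K] (h : b * a = a * b + algebraMap K A c)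
    {n N : ℕ} (hN : n < N) :
    (a + b) ^ n =
      ∑ ℓ ∈ range N, ∑ m ∈ range N, normalOrderCoeff c n ℓ m • (a ^ ℓ * b ^ m) := by
  induction n with
  | zero => simp [normalOrderCoeff, ite_and, hN]
  | succ n ih =>
    have vanish : ∀ ℓ m, N ≤ ℓ + m + 1 → normalOrderCoeff c n ℓ m = 0 :=
      fun ℓ m hℓm => normalOrderCoeff_eq_zero c fun ⟨k, hk⟩ => by omega
    have raise_left : ∑ ℓ ∈ range N, ∑ m ∈ range N,
        (if ℓ = 0 then 0 else normalOrderCoeff c n (ℓ - 1) m) • (a ^ ℓ * b ^ m) =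
        ∑ ℓ ∈ range N, ∑ m ∈ range N,
          normalOrderCoeff c n ℓ m • (a ^ (ℓ + 1) * b ^ m) := by
      rw [← sum_range_comp_succ_eq_of_zero (by simp)]
      · simp
      · exact sum_eq_zero fun m _ => by rw [if_neg (by omega), vanish _ _ (by omega), zero_smul]
    have raise_right : ∑ ℓ ∈ range N, ∑ m ∈ range N,
        (if m = 0 then 0 else normalOrderCoeff c n ℓ (m - 1)) • (a ^ ℓ * b ^ m) =
        ∑ ℓ ∈ range N, ∑ m ∈ range N,
          normalOrderCoeff c n ℓ m • (a ^ ℓ * b ^ (m + 1)) := by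
      refine sum_congr rfl fun ℓ _ => ?_
      rw [← sum_range_comp_succ_eq_of_zero (by simp)]
      · simp
      · rw [if_neg (by omega), vanish _ _ (by omega), zero_smul]
    have lower_left : ∑ ℓ ∈ range N, ∑ m ∈ range N,
        ((ℓ + 1) * c * normalOrderCoeff c n (ℓ + 1) m) • (a ^ ℓ * b ^ m) =
        ∑ ℓ ∈ range N, ∑ m ∈ range N,
          normalOrderCoeff c n ℓ m • ((ℓ * c) • (a ^ (ℓ - 1) * b ^ m)) := by
      refine Eq.trans ?_ (sum_range_comp_succ_eq_of_zero (u := fun ℓ => ∑ m ∈ range N,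
        normalOrderCoeff c n ℓ m • ((ℓ * c) • (a ^ (ℓ - 1) * b ^ m))) (by simp)
        (sum_eq_zero fun m _ => by rw [vanish _ _ (by omega), zero_smul]))
      simp [smul_smul, mul_comm]
    rw [pow_succ', ih (by omega), mul_sum]
    simp only [mul_sum, mul_smul_comm, add_mul_pow_mul_pow_of_commutator h, smul_add,
      sum_add_distrib, normalOrderCoeff_succ, add_smul, raise_left, raise_right, lower_left]

end NormalOrder

theorem Dop_mul_Xop : Dop * Xop = Xop * Dop + 1 := by
  refine LinearMap.ext fun p => ?_
  simp [Dop, Xop, Polynomial.derivative_mul, add_comm]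

/-- **Normal form of `(αX + βD)^n`.** The coefficient `I⁽ⁿ⁾_{ℓ,m}` of `X^ℓ D^m` in the
normal ordering of `(αX + βD)^n` equals `0` if `n - ℓ - m` is odd (or negative), and equals
`n! / (2^{(n-ℓ-m)/2} ((n-ℓ-m)/2)! ℓ! m!) · α^{(n+ℓ-m)/2} β^{(n-ℓ+m)/2}` if `n - ℓ - m` is
even and nonnegative. -/
theorem normal_form_linear (α β : ℝ) (n : ℕ) :
    (α • Xop + β • Dop) ^ n =
      ∑ ℓ ∈ Finset.range (n + 1), ∑ m ∈ Finset.range (n + 1),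
        (if ℓ + m ≤ n ∧ (n - (ℓ + m)) % 2 = 0 then
            (Nat.factorial n : ℝ) /
              (2 ^ ((n - (ℓ + m)) / 2) * (Nat.factorial ((n - (ℓ + m)) / 2) : ℝ) *
                (Nat.factorial ℓ : ℝ) * (Nat.factorial m : ℝ)) *
              α ^ ((n + ℓ - m) / 2) * β ^ ((n + m - ℓ) / 2)
          else 0) • (Xop ^ ℓ * Dop ^ m) := by
  have hcomm : β • Dop * α • Xop = α • Xop * β • Dop + algebraMap ℝ _ (α * β) := by
    rw [smul_mul_smul_comm, smul_mul_smul_comm, Dop_mul_Xop, Algebra.algebraMap_eq_smul_one,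
      smul_add, mul_comm β]
  rw [add_pow_eq_sum_normalOrderCoeff_smul hcomm n.lt_succ_self]
  refine sum_congr rfl fun ℓ _ => sum_congr rfl fun m _ => ?_
  rw [smul_pow, smul_pow, smul_mul_smul_comm, smul_smul]
  congr 1
  split_ifs with h
  · obtain ⟨k, hk⟩ : ∃ k, n = ℓ + m + 2 * k := ⟨(n - (ℓ + m)) / 2, by omega⟩
    rw [normalOrderCoeff_of_eq _ hk, show (n - (ℓ + m)) / 2 = k by omega,
      show (n + ℓ - m) / 2 = ℓ + k by omega, show (n + m - ℓ) / 2 = m + k by omega]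
    ring
  · rw [normalOrderCoeff_eq_zero _ fun ⟨k, hk⟩ => h ⟨by omega, by omega⟩, zero_mul]
end

section
/- The generalized Stirling numbers S_{2,2}(n,k), defined by (X²D²)^n = ∑_k S_{2,2}(n,k) X^k D^k in the Weyl algebra, satisfy S_{2,2}(n,k) = (1/k!) · ∑_{j=2}^{k} (-1)^{k-j} C(k,j) [j(j-1)]^n for n ≥ 1. -/
open Polynomial Finset fwdDiff

theorem fwdDiff_iter_sum_choose_nsmul_zero {G : Type*} [AddCommGroup G] (a : ℕ → G) (N k : ℕ) :
    Δ_[1] ^[k] (fun m ↦ ∑ i ∈ range N, m.choose i • a i) 0 = if k < N then a k else 0 :=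
  calc Δ_[1] ^[k] (fun m ↦ ∑ i ∈ range N, m.choose i • a i) 0
  _ = ∑ i ∈ range N, Δ_[1] ^[k] (fun m ↦ m.choose i • a i) 0 := by
    simp only [fwdDiff_iter_eq_sum_shift, smul_sum]
    rw [sum_comm]
  _ = ∑ i ∈ range N, (Δ_[1] ^[k] (fun m ↦ m.choose i : ℕ → ℤ) 0) • a i := by
    simp only [fwdDiff_iter_eq_sum_shift, zero_add, sum_smul, smul_assoc, natCast_zsmul]
  _ = if k < N then a k else 0 := by
    simp only [fwdDiff_iter_choose_zero, ite_smul, one_smul, zero_smul, sum_ite_eq, mem_range]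

theorem eq_sum_shift_of_eq_sum_choose_nsmul {G : Type*} [AddCommGroup G] {f a : ℕ → G} {N : ℕ}
    (hf : ∀ m, f m = ∑ i ∈ range N, m.choose i • a i) {k : ℕ} (hk : k < N) :
    a k = ∑ j ∈ range (k + 1), ((-1 : ℤ) ^ (k - j) * k.choose j) • f j := by
  have hΔ := fwdDiff_iter_sum_choose_nsmul_zero a N k
  rw [if_pos hk, ← funext hf, fwdDiff_iter_eq_sum_shift] at hΔ
  simpa using hΔ.symm

theorem Dop_pow_apply (k : ℕ) (p : ℝ[X]) : (Dop ^ k) p = derivative^[k] p := by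
  rw [Module.End.pow_apply]; rfl

theorem Xop_pow_apply (k : ℕ) (p : ℝ[X]) : (Xop ^ k) p = X ^ k * p := by
  rw [Xop, LinearMap.pow_mulLeft, LinearMap.mulLeft_apply]

theorem Xop_pow_mul_Dop_pow_apply_X_pow (k m : ℕ) :
    (Xop ^ k * Dop ^ k) (X ^ m : ℝ[X]) = (m.descFactorial k : ℝ) • X ^ m := by
  rw [Module.End.mul_apply, Dop_pow_apply, iterate_derivative_X_pow_eq_smul, Xop_pow_apply,
    mul_smul_comm]
  rcases le_or_gt k m with h | h
  · rw [← pow_add, Nat.add_sub_cancel' h]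
  · simp [Nat.descFactorial_eq_zero_iff_lt.2 h]

theorem sum_smul_Xop_pow_mul_Dop_pow_apply_X_pow (s : Finset ℕ) (c : ℕ → ℝ) (m : ℕ) :
    (∑ k ∈ s, c k • (Xop ^ k * Dop ^ k)) (X ^ m : ℝ[X])
      = (∑ k ∈ s, c k * m.descFactorial k) • X ^ m := by
  simp only [LinearMap.sum_apply, LinearMap.smul_apply, Xop_pow_mul_Dop_pow_apply_X_pow,
    smul_smul, sum_smul]

theorem X2D2_pow_apply_X_pow (n m : ℕ) :
    ((Xop ^ 2 * Dop ^ 2) ^ n) (X ^ m : ℝ[X]) = ((m : ℝ) * (m - 1)) ^ n • X ^ m := by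
  induction n with
  | zero => simp
  | succ n ih =>
    rw [pow_succ', Module.End.mul_apply, ih, map_smul, Xop_pow_mul_Dop_pow_apply_X_pow, smul_smul,
      Nat.cast_descFactorial_two, pow_succ]

/-- **Generalized Stirling numbers for `(X²D²)^n`.** If `S n k` are the coefficients of the
normal ordering `(X²D²)^n = ∑_k S(n,k) X^k D^k` (as operators on polynomials), then for
`n ≥ 1` and `k ≤ 2n` one has
`S_{2,2}(n,k) = (1/k!) ∑_{j=2}^{k} (-1)^{k-j} C(k,j) [j(j-1)]^n`. -/
theorem generalized_stirling_formula (S : ℕ → ℕ → ℝ)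
    (hS : ∀ n : ℕ, (Xop ^ 2 * Dop ^ 2) ^ n =
      ∑ k ∈ Finset.range (2 * n + 1), S n k • (Xop ^ k * Dop ^ k))
    (n k : ℕ) (hn : 1 ≤ n) (hk : k ≤ 2 * n) :
    S n k = (1 / (Nat.factorial k : ℝ)) *
      ∑ j ∈ Finset.Icc 2 k,
        (-1 : ℝ) ^ (k - j) * (Nat.choose k j : ℝ) * ((j : ℝ) * ((j : ℝ) - 1)) ^ n := by
  have hnewton (m : ℕ) : ((m : ℝ) * (m - 1)) ^ n
      = ∑ i ∈ range (2 * n + 1), m.choose i • (i.factorial * S n i) := by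
    have hm := congrArg (· (X ^ m)) (hS n)
    simp only [X2D2_pow_apply_X_pow, sum_smul_Xop_pow_mul_Dop_pow_apply_X_pow] at hm
    rw [smul_left_injective ℝ (pow_ne_zero m X_ne_zero) hm]
    refine sum_congr rfl fun i _ ↦ ?_
    rw [Nat.descFactorial_eq_factorial_mul_choose, nsmul_eq_mul]
    push_cast
    ring
  have hcoeff := eq_sum_shift_of_eq_sum_choose_nsmul hnewton (Nat.lt_succ_of_le hk)
  have hlow : ∑ j ∈ Icc 2 k, (-1 : ℝ) ^ (k - j) * k.choose j * ((j : ℝ) * (j - 1)) ^ n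
      = ∑ j ∈ range (k + 1), ((-1 : ℤ) ^ (k - j) * k.choose j) • ((j : ℝ) * (j - 1)) ^ n :=
    calc _ = ∑ j ∈ range (k + 1), (-1 : ℝ) ^ (k - j) * k.choose j * ((j : ℝ) * (j - 1)) ^ n := by
          refine sum_subset (fun j hj ↦ by simp at hj ⊢; omega) fun j hj hj' ↦ ?_
          have : j < 2 := by simp at hj hj'; omega
          interval_cases j <;> simp [zero_pow (Nat.one_le_iff_ne_zero.1 hn)]
      _ = _ := sum_congr rfl fun j _ ↦ by push_cast [zsmul_eq_mul]; ring
  rw [hlow, ← hcoeff]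
  field_simp
end

section
/- The generalized Stirling numbers satisfy S_{2,2}(n,k) = ∑_{r=0}^{n} (-1)^{n-r} C(n,r) S(n+r, k), where S denotes ordinary Stirling numbers of the second kind. -/
/-! Both sides are computed from the number of surjections `Fin m → Fin k`. A surjection is the
same as a partition into `k` blocks (its fibres) with a bijective labelling of the blocks, so there
are `k! S(m,k)` of them; inclusion–exclusion over the values that are missed counts them as
`∑_j (-1)^(k-j) C(k,j) j^m`. Expanding `(j(j-1))^n = ∑_r (-1)^(n-r) C(n,r) j^(n+r)` and exchanging
the two sums turns the defining sum of `S_{2,2}(n,k)` into `∑_r (-1)^(n-r) C(n,r) S(n+r,k)`. -/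

/-- The Stirling number of the second kind `S(n,k)`: the number of partitions of an
`n`-element set into exactly `k` nonempty blocks. -/
noncomputable def stirling2 (n k : ℕ) : ℕ :=
  Nat.card {P : Finpartition (Finset.univ : Finset (Fin n)) // P.parts.card = k}

open Finset Function
open scoped Nat

theorem Fintype.card_equiv_eq_ite {α β : Type*} [Fintype α] [DecidableEq α] [Fintype β]
    [DecidableEq β] :
    Fintype.card (α ≃ β) = if Fintype.card α = Fintype.card β then (Fintype.card α)! else 0 := by
  split_ifs with h
  · exact Fintype.card_equiv (Fintype.equivOfCardEq h)
  · exact Fintype.card_eq_zero_iff.2 ⟨fun e => h (Fintype.card_congr e)⟩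

namespace Finpartition

variable {α β : Type*} [Fintype α] [DecidableEq α]

def labelling (P : Finpartition (univ : Finset α)) (e : P.parts ≃ β) (x : α) : β :=
  e ⟨P.part x, P.part_mem.2 (mem_univ x)⟩

theorem labelling_eq_iff {P : Finpartition (univ : Finset α)} {e : P.parts ≃ β} {x : α}
    {b : β} :
    P.labelling e x = b ↔ x ∈ (e.symm b : Finset α) := by
  rw [labelling, ← Equiv.eq_symm_apply, Subtype.ext_iff, P.part_eq_iff_mem (e.symm b).2]

theorem parts_eq_image_symm [Fintype β] (P : Finpartition (univ : Finset α)) (e : P.parts ≃ β) :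
    P.parts = univ.image fun b => (e.symm b : Finset α) := by
  ext t
  refine ⟨fun ht => mem_image.2 ⟨e ⟨t, ht⟩, mem_univ _, by simp⟩, fun ht => ?_⟩
  obtain ⟨b, -, rfl⟩ := mem_image.1 ht
  exact (e.symm b).2

theorem labelling_surjective (P : Finpartition (univ : Finset α)) (e : P.parts ≃ β) :
    Surjective (P.labelling e) := fun b =>
  (P.nonempty_of_mem_parts (e.symm b).2).imp fun _ hx => labelling_eq_iff.2 hx

theorem labelling_sigma_injective [Fintype β] :
    Injective fun Pe : Σ P : Finpartition (univ : Finset α), P.parts ≃ β =>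
      Pe.1.labelling Pe.2 := by
  rintro ⟨P, e⟩ ⟨Q, e'⟩ h
  have hsymm (b : β) : (e.symm b : Finset α) = e'.symm b := by
    ext x
    rw [← labelling_eq_iff, ← labelling_eq_iff]
    exact Eq.congr_left (congrFun h x)
  obtain rfl : P = Q := Finpartition.ext <| by
    rw [parts_eq_image_symm P e, parts_eq_image_symm Q e']
    simp only [hsymm]
  obtain rfl : e = e' := Equiv.symm_bijective.injective (Equiv.ext fun b => Subtype.ext (hsymm b))
  rfl

variable [Fintype β] [DecidableEq β] (f : α → β) (hf : Surjective f)

def ofFibers : Finpartition (univ : Finset α) :=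
  ofExistsUnique (univ.image fun b => ({x | f x = b} : Finset α)) (fun _ _ => subset_univ _)
    (fun x _ => ⟨({y | f y = f x} : Finset α), ⟨mem_image_of_mem _ (mem_univ _), by simp⟩, by
      rintro t ⟨ht, hxt⟩
      obtain ⟨b, -, rfl⟩ := mem_image.1 ht
      simp_all⟩)
    (by
      simp only [mem_image, mem_univ, true_and, not_exists]
      intro b h
      obtain ⟨x, rfl⟩ := hf b
      exact filter_eq_empty_iff.1 h (mem_univ x) rfl)

noncomputable def fibersEquiv : (ofFibers f hf).parts ≃ β :=
  (Equiv.ofBijective (fun b => ⟨({x | f x = b} : Finset α), mem_image_of_mem _ (mem_univ b)⟩)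
    ⟨fun b c h => by
      obtain ⟨x, rfl⟩ := hf b
      simpa using (Finset.ext_iff.1 (congrArg Subtype.val h) x),
    fun ⟨t, ht⟩ => by
      obtain ⟨b, -, rfl⟩ := mem_image.1 ht
      exact ⟨b, rfl⟩⟩).symm

theorem labelling_fibersEquiv : (ofFibers f hf).labelling (fibersEquiv f hf) = f := by
  ext x
  exact labelling_eq_iff.2 (mem_filter.2 ⟨mem_univ x, rfl⟩)

noncomputable def sigmaEquivSurjective :
    (Σ P : Finpartition (univ : Finset α), P.parts ≃ β) ≃ {f : α → β // Surjective f} :=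
  Equiv.ofBijective (fun Pe => ⟨Pe.1.labelling Pe.2, labelling_surjective Pe.1 Pe.2⟩)
    ⟨fun _ _ h => labelling_sigma_injective (congrArg Subtype.val h),
      fun ⟨f, hf⟩ =>
        ⟨⟨ofFibers f hf, fibersEquiv f hf⟩, Subtype.ext (labelling_fibersEquiv f hf)⟩⟩

end Finpartition

section
variable {α β : Type*} [Fintype α] [DecidableEq α] [Fintype β] [DecidableEq β]

theorem card_surjective_eq_card_finpartition_mul_factorial :
    Fintype.card {f : α → β // Surjective f} =
      Fintype.card {P : Finpartition (univ : Finset α) // #P.parts = Fintype.card β} *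
        (Fintype.card β)! := by
  rw [← Fintype.card_congr Finpartition.sigmaEquivSurjective, Fintype.card_sigma]
  simp only [Fintype.card_equiv_eq_ite, Fintype.card_coe]
  rw [sum_ite, sum_const_zero, add_zero, sum_congr rfl fun P hP => by rw [(mem_filter.1 hP).2],
    sum_const, smul_eq_mul, Fintype.card_subtype]

theorem card_surjective_eq_alternating_sum :
    (Fintype.card {f : α → β // Surjective f} : ℤ) =
      ∑ j ∈ range (Fintype.card β + 1), (-1) ^ (Fintype.card β - j) *
        ((Fintype.card β).choose j : ℤ) * (j : ℤ) ^ Fintype.card α := by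
  have hsurj : ({f | Surjective f} : Finset (α → β)) =
      univ.inf fun b => (Fintype.piFinset fun _ => {b}ᶜ)ᶜ := by
    ext f
    simp only [mem_filter, mem_univ, true_and, mem_inf, mem_compl, Fintype.mem_piFinset,
      mem_singleton]
    simp [Surjective]
  have hmiss (t : Finset β) :
      #(t.inf fun b => Fintype.piFinset fun _ : α => ({b}ᶜ : Finset β)) =
        (Fintype.card β - #t) ^ Fintype.card α := by
    have hpi : (t.inf fun b => Fintype.piFinset fun _ : α => ({b}ᶜ : Finset β)) =
        Fintype.piFinset fun _ => tᶜ := by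
      ext f
      simp only [mem_inf, Fintype.mem_piFinset, mem_compl, mem_singleton]
      exact ⟨fun h a ha => h _ ha a rfl, fun h i hi a hai => h a (hai ▸ hi)⟩
    rw [hpi, Fintype.card_piFinset, prod_const, card_compl, card_univ]
  rw [Fintype.card_subtype, hsurj, inclusion_exclusion_card_inf_compl]
  simp only [hmiss, Nat.cast_pow]
  rw [sum_powerset_apply_card
      (fun j => (-1 : ℤ) ^ j * ((Fintype.card β - j : ℕ) : ℤ) ^ Fintype.card α),
    card_univ, ← sum_range_reflect]
  refine sum_congr rfl fun j hj => ?_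
  have hj : j ≤ Fintype.card β := Nat.lt_succ_iff.1 (mem_range.1 hj)
  simp only [add_tsub_cancel_right, Nat.choose_symm hj, Nat.sub_sub_self hj, nsmul_eq_mul]
  ring
end

theorem stirling2_mul_factorial (m k : ℕ) :
    stirling2 m k * k ! = Fintype.card {f : Fin m → Fin k // Surjective f} := by
  rw [card_surjective_eq_card_finpartition_mul_factorial, stirling2, Nat.card_eq_fintype_card,
    Fintype.card_fin]

theorem stirling2_mul_factorial_eq_sum {R : Type*} [CommRing R] (m k : ℕ) :
    (stirling2 m k * k ! : R) =
      ∑ j ∈ range (k + 1), (-1) ^ (k - j) * (k.choose j : R) * (j : R) ^ m := by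
  have h := congrArg (Int.cast : ℤ → R)
    (card_surjective_eq_alternating_sum (α := Fin m) (β := Fin k))
  push_cast [Fintype.card_fin, ← stirling2_mul_factorial] at h
  exact h

theorem mul_sub_one_pow {R : Type*} [CommRing R] (x : R) (n : ℕ) :
    (x * (x - 1)) ^ n = ∑ r ∈ range (n + 1), (-1) ^ (n - r) * (n.choose r : R) * x ^ (n + r) := by
  rw [sub_eq_add_neg, mul_pow, add_pow, mul_sum]
  exact sum_congr rfl fun r _ => by ring

/-- **Generalized Stirling numbers via ordinary Stirling numbers.** The generalized Stirling
numbers `S_{2,2}(n,k) = (1/k!) ∑_{j} (-1)^{k-j} C(k,j) [j(j-1)]^n` satisfy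
`S_{2,2}(n,k) = ∑_{r=0}^{n} (-1)^{n-r} C(n,r) S(n+r,k)`, where `S` denotes the ordinary
Stirling numbers of the second kind. -/
theorem generalized_stirling_eq_alternating_stirling_sum (n k : ℕ) :
    (1 / (Nat.factorial k : ℝ)) *
        ∑ j ∈ Finset.range (k + 1),
          (-1 : ℝ) ^ (k - j) * (Nat.choose k j : ℝ) * ((j : ℝ) * ((j : ℝ) - 1)) ^ n =
      ∑ r ∈ Finset.range (n + 1),
        (-1 : ℝ) ^ (n - r) * (Nat.choose n r : ℝ) * (stirling2 (n + r) k : ℝ) := by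
  have hS (m : ℕ) : (stirling2 m k : ℝ) =
      1 / k ! * ∑ j ∈ range (k + 1), (-1) ^ (k - j) * (k.choose j : ℝ) * (j : ℝ) ^ m := by
    rw [← stirling2_mul_factorial_eq_sum]
    field_simp
  simp_rw [hS, mul_sub_one_pow, mul_sum]
  rw [sum_comm]
  exact sum_congr rfl fun r _ => sum_congr rfl fun j _ => by ring
end

section
/- The number of set partitions of {1,…,n} with no contiguity (no block containing two consecutive integers j, j+1) equals the Bell number B(n-1), for all n ≥ 1. -/
/-!
Identify a partition `σ` of `Fin m` with a partition of `{1, …, m}` and add a new point `0`. In every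
maximal run `a, a + 1, …, b` of consecutive points lying in one block of `σ`, move the points
`a + 1, a + 3, …` into the block of `0`; the result `τ` is a partition of `Fin (m + 1)` without
contiguities. Conversely, in a contiguity-free `τ` let every point `≠ 0` of the block of `0` rejoin
the block of its predecessor. Since a contiguity-free `τ` never puts a point and its successor in one
block, the points that this merging takes out of the block of `0` are exactly those at odd distance
from the start of their run, so the two constructions are mutually inverse.
-/

open Finset

namespace Finpartition

variable {α : Type*} [DecidableEq α]

theorem parts_eq_image_part {s : Finset α} (P : Finpartition s) : P.parts = s.image P.part := by
  ext t
  simp only [mem_image]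
  refine ⟨fun ht => P.part_surjOn ht, ?_⟩
  rintro ⟨a, ha, rfl⟩
  exact P.part_mem.2 ha

theorem part_injective {s : Finset α} :
    Function.Injective (part : Finpartition s → α → Finset α) := by
  intro P Q h
  ext1
  rw [parts_eq_image_part, parts_eq_image_part, h]

variable [Fintype α]

noncomputable def equivSetoid : Finpartition (univ : Finset α) ≃ Setoid α where
  toFun P := Setoid.ker P.part
  invFun s := by classical exact ofSetoid s
  left_inv P := by
    classical
    refine part_injective (funext fun a => ?_)
    ext b
    rw [mem_part_ofSetoid_iff_rel, Setoid.ker_def, eq_comm,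
      P.mem_part_iff_part_eq_part (mem_univ b) (mem_univ a)]
  right_inv s := by
    classical
    ext a b
    rw [Setoid.ker_def, ← (ofSetoid s).mem_part_iff_part_eq_part (mem_univ a) (mem_univ b),
      mem_part_ofSetoid_iff_rel]
    exact ⟨s.symm, s.symm⟩

theorem equivSetoid_rel_iff (P : Finpartition (univ : Finset α)) (a b : α) :
    equivSetoid P a b ↔ ∃ t ∈ P.parts, a ∈ t ∧ b ∈ t := by
  rw [← P.mem_part_iff_exists, P.mem_part_iff_part_eq_part (mem_univ a) (mem_univ b)]
  rfl

end Finpartition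

namespace Setoid

open scoped Classical

variable {n m : ℕ}

def ContiguityFree (τ : Setoid (Fin n)) : Prop :=
  ∀ j j' : Fin n, (j' : ℕ) = j + 1 → ¬ τ j j'

def OddInRun (σ : Setoid (Fin m)) : Fin m → Prop
  | ⟨0, _⟩ => False
  | ⟨k + 1, h⟩ => σ ⟨k, by omega⟩ ⟨k + 1, h⟩ ∧ ¬ OddInRun σ ⟨k, by omega⟩

theorem oddInRun_iff_of_val_eq_succ {σ : Setoid (Fin m)} {i i' : Fin m}
    (h : (i' : ℕ) = i + 1) : σ.OddInRun i' ↔ σ i i' ∧ ¬ σ.OddInRun i := by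
  obtain ⟨i, hi⟩ := i
  obtain ⟨i', hi'⟩ := i'
  subst h
  rw [OddInRun]

theorem not_oddInRun_of_val_eq_zero {σ : Setoid (Fin m)} {i : Fin m} (h : (i : ℕ) = 0) :
    ¬ σ.OddInRun i := by
  obtain ⟨i, hi⟩ := i
  subst h
  rw [OddInRun]
  exact not_false

noncomputable def spreadClass (σ : Setoid (Fin m)) : Fin (m + 1) → Option (Quotient σ) :=
  Fin.cases none fun i => if σ.OddInRun i then none else some ⟦i⟧

noncomputable def spread (σ : Setoid (Fin m)) : Setoid (Fin (m + 1)) :=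
  ker σ.spreadClass

noncomputable def mergeRep (τ : Setoid (Fin (m + 1))) (i : Fin m) : Fin (m + 1) :=
  if τ i.succ 0 then i.castSucc else i.succ

noncomputable def merge (τ : Setoid (Fin (m + 1))) : Setoid (Fin m) :=
  comap τ.mergeRep τ

theorem spread_iff {σ : Setoid (Fin m)} {a b : Fin (m + 1)} :
    σ.spread a b ↔ σ.spreadClass a = σ.spreadClass b :=
  Iff.rfl

theorem merge_iff {τ : Setoid (Fin (m + 1))} {i j : Fin m} :
    τ.merge i j ↔ τ (τ.mergeRep i) (τ.mergeRep j) :=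
  Iff.rfl

section spread

variable (σ : Setoid (Fin m))

@[simp]
theorem spreadClass_zero : σ.spreadClass 0 = none := rfl

theorem spreadClass_succ (i : Fin m) :
    σ.spreadClass i.succ = if σ.OddInRun i then none else some ⟦i⟧ := by
  simp [spreadClass]

theorem spread_succ_zero_iff (i : Fin m) : σ.spread i.succ 0 ↔ σ.OddInRun i := by
  rw [spread_iff, spreadClass_succ, spreadClass_zero]
  split_ifs with h <;> simp [h]

theorem contiguityFree_spread : σ.spread.ContiguityFree := by
  intro j j' hj hjj'
  rw [spread_iff] at hjj'
  obtain rfl | ⟨i, rfl⟩ := Fin.eq_zero_or_eq_succ j <;>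
    obtain rfl | ⟨i', rfl⟩ := Fin.eq_zero_or_eq_succ j'
  · simp at hj
  · rw [spreadClass_succ, if_neg (not_oddInRun_of_val_eq_zero (by simpa using hj))] at hjj'
    simp at hjj'
  · simp at hj
  · have hi' := oddInRun_iff_of_val_eq_succ (σ := σ) (by simpa using hj : (i' : ℕ) = i + 1)
    rw [spreadClass_succ, spreadClass_succ] at hjj'
    by_cases h : σ.OddInRun i <;> by_cases h' : σ.OddInRun i' <;>
      simp only [h, h', if_true, if_false, reduceCtorEq, Option.some_inj] at hjj'
    · exact (hi'.1 h').2 h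
    · exact h' (hi'.2 ⟨Quotient.exact hjj', h⟩)

theorem spreadClass_mergeRep_spread (i : Fin m) :
    σ.spreadClass (σ.spread.mergeRep i) = some ⟦i⟧ := by
  rw [mergeRep, spread_succ_zero_iff]
  split_ifs with hi
  · obtain ⟨_ | k, hk⟩ := i
    · exact absurd hi (not_oddInRun_of_val_eq_zero rfl)
    · rw [OddInRun] at hi
      rw [show (Fin.castSucc ⟨k + 1, hk⟩ : Fin (m + 1)) = Fin.succ ⟨k, by omega⟩ from rfl,
        spreadClass_succ, if_neg hi.2, Quotient.sound hi.1]
  · rw [spreadClass_succ, if_neg hi]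

theorem merge_spread : σ.spread.merge = σ := by
  ext i j
  rw [merge_iff, spread_iff, spreadClass_mergeRep_spread,
    spreadClass_mergeRep_spread, Option.some_inj, Quotient.eq]

end spread

section merge

variable {τ : Setoid (Fin (m + 1))}

theorem oddInRun_merge_iff (hτ : τ.ContiguityFree) (i : Fin m) :
    τ.merge.OddInRun i ↔ τ i.succ 0 := by
  obtain ⟨k, hk⟩ := i
  induction k with
  | zero =>
    exact iff_of_false (not_oddInRun_of_val_eq_zero rfl)
      fun h => hτ 0 (Fin.succ ⟨0, hk⟩) rfl (τ.symm h)
  | succ k ih =>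
    rw [OddInRun, ih (by omega)]
    by_cases h : τ (Fin.succ ⟨k, by omega⟩) 0
    · simp only [h, not_true_eq_false, and_false, false_iff]
      exact fun h' => hτ (Fin.succ ⟨k, by omega⟩) (Fin.succ ⟨k + 1, hk⟩) rfl
        (τ.trans h (τ.symm h'))
    · simp only [h, not_false_eq_true, and_true, merge_iff, mergeRep, if_false]
      split_ifs with h'
      · exact iff_of_true (τ.refl _) h'
      · exact iff_of_false (hτ _ _ rfl) h'

theorem spreadClass_merge_eq_none_iff (hτ : τ.ContiguityFree) (a : Fin (m + 1)) :
    τ.merge.spreadClass a = none ↔ τ a 0 := by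
  obtain rfl | ⟨i, rfl⟩ := Fin.eq_zero_or_eq_succ a
  · simp
  · rw [spreadClass_succ, ← oddInRun_merge_iff hτ]
    split_ifs with h <;> simp [h]

theorem spreadClass_merge_succ (hτ : τ.ContiguityFree) {i : Fin m} (hi : ¬ τ i.succ 0) :
    τ.merge.spreadClass i.succ = some ⟦i⟧ := by
  rw [spreadClass_succ, if_neg ((oddInRun_merge_iff hτ i).not.2 hi)]

theorem spread_merge (hτ : τ.ContiguityFree) : τ.merge.spread = τ := by
  ext a b
  have hnone := spreadClass_merge_eq_none_iff hτ
  rw [spread_iff]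
  by_cases ha : τ a 0 <;> by_cases hb : τ b 0
  · exact iff_of_true (by rw [(hnone a).2 ha, (hnone b).2 hb]) (τ.trans ha (τ.symm hb))
  · exact iff_of_false (fun h => hb ((hnone b).1 (h ▸ (hnone a).2 ha)))
      (fun h => hb (τ.trans (τ.symm h) ha))
  · exact iff_of_false (fun h => ha ((hnone a).1 (h ▸ (hnone b).2 hb)))
      (fun h => ha (τ.trans h hb))
  · obtain rfl | ⟨i, rfl⟩ := Fin.eq_zero_or_eq_succ a
    · exact absurd (τ.refl 0) ha
    obtain rfl | ⟨j, rfl⟩ := Fin.eq_zero_or_eq_succ b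
    · exact absurd (τ.refl 0) hb
    rw [spreadClass_merge_succ hτ ha, spreadClass_merge_succ hτ hb, Option.some_inj,
      Quotient.eq, merge_iff, mergeRep, mergeRep, if_neg ha, if_neg hb]

end merge

noncomputable def contiguityFreeEquiv :
    {τ : Setoid (Fin (m + 1)) // τ.ContiguityFree} ≃ Setoid (Fin m) where
  toFun τ := τ.1.merge
  invFun σ := ⟨σ.spread, σ.contiguityFree_spread⟩
  left_inv τ := Subtype.ext (spread_merge τ.2)
  right_inv := merge_spread

end Setoid

theorem contiguity_free_partitions_card_general (n : ℕ) :
    Nat.card {P : Finpartition (Finset.univ : Finset (Fin n)) //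
        ∀ b ∈ P.parts, ∀ j j' : Fin n, (j' : ℕ) = (j : ℕ) + 1 → j ∈ b → j' ∉ b} =
      Nat.card (Finpartition (Finset.univ : Finset (Fin (n - 1)))) := by
  cases n with
  | zero => exact Nat.card_congr (Equiv.subtypeUnivEquiv fun _ _ _ j => j.elim0)
  | succ m =>
    have contiguityFree_iff (P : Finpartition (univ : Finset (Fin (m + 1)))) :
        (∀ b ∈ P.parts, ∀ j j' : Fin (m + 1), (j' : ℕ) = j + 1 → j ∈ b → j' ∉ b) ↔
          (Finpartition.equivSetoid P).ContiguityFree := by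
      simp only [Setoid.ContiguityFree, Finpartition.equivSetoid_rel_iff]
      grind
    exact Nat.card_congr ((Finpartition.equivSetoid.subtypeEquiv contiguityFree_iff).trans
      (Setoid.contiguityFreeEquiv.trans Finpartition.equivSetoid.symm))

/-- **Contiguity-free set partitions.** For `n ≥ 1`, the number of set partitions of
`{1,…,n}` having no contiguity (no block containing two consecutive integers `j, j+1`)
equals the Bell number `B(n-1)`. -/
theorem contiguity_free_partitions_card (n : ℕ) (hn : 1 ≤ n) :
    Nat.card {P : Finpartition (Finset.univ : Finset (Fin n)) //
        ∀ b ∈ P.parts, ∀ j j' : Fin n, (j' : ℕ) = (j : ℕ) + 1 → j ∈ b → j' ∉ b} =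
      Nat.card (Finpartition (Finset.univ : Finset (Fin (n - 1)))) :=
  contiguity_free_partitions_card_general n
end

section
/- In the Weyl algebra with [D,X]=1, the normal form of (X²D)^n is (X²D)^n = ∑_{k=1}^{n} (n!/k!) · C(n-1, k-1) · X^{n+k} D^k, the coefficients being the (unsigned) Lah numbers. -/
/-!
Since `D X^m = X^m D + m X^(m-1)`, left multiplication by `X²D` sends `X^(n+k) D^k` to
`X^(n+k+2) D^(k+1) + (n+k) X^(n+k+1) D^k`. Hence the normal-form coefficients of `(X²D)^n` obey the
Lah recurrence `L(n+1,k+1) = L(n,k) + (n+k+1) L(n,k+1)`, and `n!/k! · C(n-1,k-1)` satisfies the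
same recurrence by Pascal's rule and `(k+1) C(n,k+1) = (n-k) C(n,k)`.
-/

open Finset
open scoped Nat

def lah : ℕ → ℕ → ℕ
  | 0, 0 => 1
  | 0, _ + 1 => 0
  | _ + 1, 0 => 0
  | n + 1, k + 1 => lah n k + (n + k + 1) * lah n (k + 1)

theorem lah_succ_zero (n : ℕ) : lah (n + 1) 0 = 0 := rfl

theorem lah_succ_succ (n k : ℕ) : lah (n + 1) (k + 1) = lah n k + (n + k + 1) * lah n (k + 1) := rfl

theorem lah_eq_zero_of_lt : ∀ {n k : ℕ}, n < k → lah n k = 0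
  | 0, _ + 1, _ => rfl
  | n + 1, k + 1, h => by
    rw [lah, lah_eq_zero_of_lt (by omega : n < k), lah_eq_zero_of_lt (by omega : n < k + 1),
      mul_zero, add_zero]

theorem lah_succ_succ_mul_factorial (n k : ℕ) :
    lah (n + 1) (k + 1) * (k + 1)! = (n + 1)! * n.choose k := by
  induction n generalizing k with
  | zero => cases k <;> simp [lah]
  | succ n ih =>
    cases k with
    | zero =>
      have h : lah (n + 1) 1 = (n + 1)! := by simpa using ih 0
      rw [lah_succ_succ (n + 1) 0, lah_succ_zero, zero_add, h, Nat.factorial_succ (n + 1)]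
      simp
    | succ k =>
      have key : n.choose (k + 1) * (k + 1) + n.choose k * k = n.choose k * n := by
        rcases le_or_gt k n with hk | hk
        · rw [Nat.choose_succ_right_eq, ← mul_add, Nat.sub_add_cancel hk]
        · simp [Nat.choose_eq_zero_of_lt hk, Nat.choose_eq_zero_of_lt (hk.trans (lt_add_one k))]
      have h1 := ih k
      have h2 := ih (k + 1)
      rw [Nat.factorial_succ (k + 1)] at h2
      rw [lah_succ_succ, Nat.factorial_succ (k + 1), Nat.choose_succ_succ',
        Nat.factorial_succ (n + 1)]
      linear_combination (k + 2) * h1 + (n + k + 3) * h2 + (n + 1)! * key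

theorem Xop_pow (m : ℕ) : Xop ^ m = LinearMap.mulLeft ℝ (Polynomial.X ^ m) :=
  LinearMap.pow_mulLeft ℝ (A := Polynomial ℝ) Polynomial.X m

theorem Dop_mul_Xop_pow (m : ℕ) : Dop * Xop ^ m = Xop ^ m * Dop + (m : ℝ) • Xop ^ (m - 1) := by
  refine LinearMap.ext fun p => ?_
  simp only [Module.End.mul_apply, LinearMap.add_apply, LinearMap.smul_apply, Xop_pow, Dop,
    LinearMap.mulLeft_apply, Polynomial.derivative_mul, Polynomial.derivative_X_pow,
    Polynomial.smul_eq_C_mul]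
  ring

theorem Xop_sq_Dop_mul (m k : ℕ) :
    Xop ^ 2 * Dop * (Xop ^ m * Dop ^ k)
      = Xop ^ (m + 2) * Dop ^ (k + 1) + (m : ℝ) • (Xop ^ (m + 1) * Dop ^ k) := by
  calc Xop ^ 2 * Dop * (Xop ^ m * Dop ^ k) = Xop ^ 2 * (Dop * Xop ^ m) * Dop ^ k := by
        simp only [mul_assoc]
    _ = _ := by
      rw [Dop_mul_Xop_pow]
      rcases m with _ | m
      · simp [pow_succ' Dop, mul_assoc]
      · simp only [mul_add, add_mul, mul_smul_comm, smul_mul_assoc, ← mul_assoc, ← pow_add,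
          add_tsub_cancel_right]
        rw [mul_assoc, ← pow_succ' Dop k, add_comm 2 (m + 1), add_comm 2 m]

theorem sum_range_succ_shift {M : Type*} [AddCommMonoid M] (f : ℕ → M) (n : ℕ) (h0 : f 0 = 0)
    (hn : f (n + 1) = 0) : ∑ k ∈ range (n + 1), f (k + 1) = ∑ k ∈ range (n + 1), f k := by
  rw [← add_zero (∑ k ∈ range (n + 1), f (k + 1)), ← h0, ← sum_range_succ', sum_range_succ, hn,
    add_zero]

theorem X2D_pow_eq_sum_lah (n : ℕ) :
    (Xop ^ 2 * Dop) ^ n = ∑ k ∈ range (n + 1), (lah n k : ℝ) • (Xop ^ (n + k) * Dop ^ k) := by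
  induction n with
  | zero => simp [lah]
  | succ n ih =>
    set T : ℕ → Module.End ℝ (Polynomial ℝ) := fun k => Xop ^ (n + 1 + k) * Dop ^ k with hT
    have step (k : ℕ) : Xop ^ 2 * Dop * ((lah n k : ℝ) • (Xop ^ (n + k) * Dop ^ k))
        = (lah n k : ℝ) • T (k + 1) + ((n + k : ℝ) * lah n k) • T k := by
      rw [mul_smul_comm, Xop_sq_Dop_mul, smul_add, smul_smul, hT]
      push_cast
      rw [mul_comm (lah n k : ℝ)]
      congr 4 <;> omega
    calc (Xop ^ 2 * Dop) ^ (n + 1)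
        = ∑ k ∈ range (n + 1), ((lah n k : ℝ) • T (k + 1) + ((n + k : ℝ) * lah n k) • T k) := by
          rw [pow_succ', ih, mul_sum]
          exact sum_congr rfl fun k _ => step k
      _ = ∑ k ∈ range (n + 1), ((lah n k : ℝ) • T (k + 1)
            + ((n + (k + 1 : ℕ) : ℝ) * lah n (k + 1)) • T (k + 1)) := by
          rw [sum_add_distrib, sum_add_distrib,
            sum_range_succ_shift (fun k => ((n + k : ℝ) * lah n k) • T k) n]
          -- the boundary terms vanish: `n * lah n 0 = 0` and `lah n (n + 1) = 0`
          · rcases n with _ | n <;> simp [lah_succ_zero]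
          · simp [lah_eq_zero_of_lt (lt_add_one n)]
      _ = ∑ k ∈ range (n + 1 + 1), (lah (n + 1) k : ℝ) • T k := by
          rw [sum_range_succ' _ (n + 1), lah_succ_zero, Nat.cast_zero, zero_smul, add_zero]
          refine sum_congr rfl fun k _ => ?_
          rw [← add_smul, lah_succ_succ]
          push_cast
          ring_nf

theorem cast_lah_succ_succ (n k : ℕ) :
    (lah (n + 1) (k + 1) : ℝ) = (n + 1)! / (k + 1)! * n.choose k := by
  rw [div_mul_eq_mul_div, eq_div_iff (by positivity)]
  exact_mod_cast lah_succ_succ_mul_factorial n k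

/-- **Normal form of `(X²D)^n` via Lah numbers.** As operators on `ℝ[x]`, for `n ≥ 1`:
`(X²D)^n = ∑_{k=1}^{n} (n!/k!) C(n-1,k-1) X^{n+k} D^k`. -/
theorem normal_form_X2D_pow (n : ℕ) (hn : 1 ≤ n) :
    (Xop ^ 2 * Dop) ^ n =
      ∑ k ∈ Finset.Icc 1 n,
        (((Nat.factorial n : ℝ) / (Nat.factorial k : ℝ)) * (Nat.choose (n - 1) (k - 1) : ℝ)) •
          (Xop ^ (n + k) * Dop ^ k) := by
  obtain ⟨m, rfl⟩ := Nat.exists_eq_add_of_le' hn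
  rw [X2D_pow_eq_sum_lah, sum_range_succ', lah_succ_zero, Nat.cast_zero, zero_smul, add_zero,
    ← Ico_add_one_right_eq_Icc, sum_Ico_eq_sum_range, Nat.add_sub_cancel]
  refine sum_congr rfl fun k _ => ?_
  rw [add_comm 1 k, cast_lah_succ_succ, Nat.add_sub_cancel, Nat.add_sub_cancel]
end
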